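/- A connected signed weighted graph G is strictly unbalanced if and only if ρ(W) < ρ(W̄), where W is its signed weighted adjacency matrix, W̄ is the entrywise absolute value of W, and ρ denotes spectral radius. -/

import Mathlib

/-!
If `W = D |W| D` or `W = -D |W| D` for a diagonal `±1` matrix `D = D⁻¹`, then `W` is similar to
`±|W|` and the spectral radii agree. Conversely, let `W v = λ v` with `|λ| = ρ(W)`. The triangle
inequality and the Rayleigh bound for the symmetric matrix `|W|` give
`ρ(W) ‖v‖² = |vᵀ W v| ≤ |v|ᵀ |W| |v| ≤ ρ(|W|) ‖v‖²`, so if `ρ(|W|) ≤ ρ(W)` both are equalities.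
Since `ρ(|W|) - |W|` is positive semidefinite, equality in the Rayleigh bound makes `|v|` an
eigenvector of `|W|`, and connectivity forces it to be strictly positive. Equality in the triangle
inequality puts all the terms `v i * W i j * v j` on one side of `0`, and then `σ = sign v`
exhibits `W` as balanced or antibalanced.
-/

/-- The spectral radius of a real matrix. -/
noncomputable def specRad {n : ℕ} (M : Matrix (Fin n) (Fin n) ℝ) : ℝ :=
  sSup (abs '' spectrum ℝ M)

open Matrix

theorem Finset.nonneg_or_nonpos_of_abs_sum_eq_sum_abs {ι R : Type*} [Field R] [LinearOrder R]
    [IsStrictOrderedRing R] {s : Finset ι} {f : ι → R} (h : |∑ i ∈ s, f i| = ∑ i ∈ s, |f i|) :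
    (∀ i ∈ s, 0 ≤ f i) ∨ (∀ i ∈ s, f i ≤ 0) := by
  rcases le_total 0 (∑ i ∈ s, f i) with hs | hs
  · left
    rw [abs_of_nonneg hs, eq_comm, ← sub_eq_zero, ← sum_sub_distrib,
      sum_eq_zero_iff_of_nonneg fun i _ => sub_nonneg.mpr (le_abs_self _)] at h
    exact fun i hi => abs_eq_self.mp (sub_eq_zero.mp (h i hi))
  · right
    rw [abs_of_nonpos hs, eq_comm, ← sub_eq_zero, sub_neg_eq_add, ← sum_add_distrib,
      sum_eq_zero_iff_of_nonneg fun i _ => neg_le_iff_add_nonneg'.mp (neg_abs_le _)] at h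
    exact fun i hi => abs_eq_neg_self.mp (eq_neg_of_add_eq_zero_left (h i hi))

theorem eq_sign_mul_abs_mul_sign_of_nonneg {R : Type*} [Field R] [LinearOrder R]
    [IsStrictOrderedRing R] {a b w : R} (ha : a ≠ 0) (hb : b ≠ 0) (h : 0 ≤ a * w * b) :
    w = (SignType.sign a : R) * |w| * (SignType.sign b : R) := by
  have hab : 0 ≤ w * (a * b) := by linarith [show a * w * b = w * (a * b) by ring]
  rw [mul_right_comm, ← SignType.coe_mul, ← sign_mul]
  rcases (mul_ne_zero ha hb).lt_or_gt with hc | hc <;> rcases le_total 0 w with hw | hw <;>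
    simp [sign_neg, sign_pos, hc, abs_of_nonneg, abs_of_nonpos, hw] <;> nlinarith

namespace Matrix

variable {ι R : Type*} [Fintype ι]

theorem exists_mulVec_eq_smul_of_mem_spectrum [DecidableEq ι] [Field R] {M : Matrix ι ι R}
    {z : R} (hz : z ∈ spectrum R M) : ∃ v, v ≠ 0 ∧ M *ᵥ v = z • v := by
  rw [← spectrum_toLin', ← Module.End.hasEigenvalue_iff_mem_spectrum] at hz
  obtain ⟨v, hv⟩ := hz.exists_hasEigenvector
  exact ⟨v, hv.2, by rw [← toLin'_apply, hv.apply_eq_smul]⟩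

theorem dotProduct_mulVec_eq_sum [CommSemiring R] (v w : ι → R) (M : Matrix ι ι R) :
    v ⬝ᵥ M *ᵥ w = ∑ p : ι × ι, v p.1 * M p.1 p.2 * w p.2 := by
  simp [dotProduct, mulVec, Finset.mul_sum, Fintype.sum_prod_type, mul_assoc]

section LinearOrderedField

variable [Field R] [LinearOrder R] [IsStrictOrderedRing R]

theorem abs_dotProduct_mulVec_le (v : ι → R) (M : Matrix ι ι R) :
    |v ⬝ᵥ M *ᵥ v| ≤ |v| ⬝ᵥ M.map (|·|) *ᵥ |v| := by
  simpa [dotProduct_mulVec_eq_sum, abs_mul] using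
    Finset.abs_sum_le_sum_abs (fun p : ι × ι => v p.1 * M p.1 p.2 * v p.2) Finset.univ

theorem pos_of_mulVec_eq_smul [DecidableEq ι] {B : Matrix ι ι R} (hB : ∀ i j, 0 ≤ B i j)
    (hconn : ∀ i j, ∃ m : ℕ, (B ^ m) i j ≠ 0) {u : ι → R} {r : R} (hu : 0 ≤ u) (hu0 : u ≠ 0)
    (hBu : B *ᵥ u = r • u) (i : ι) : 0 < u i := by
  have hBmu : ∀ m : ℕ, (B ^ m) *ᵥ u = r ^ m • u := fun m => by
    induction m with
    | zero => simp
    | succ m ih => rw [pow_succ, ← mulVec_mulVec, hBu, mulVec_smul, ih, smul_smul, ← pow_succ']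
  obtain ⟨j, hj⟩ := Function.ne_iff.mp hu0
  obtain ⟨m, hm⟩ := hconn i j
  have hBm := pow_apply_nonneg hB m
  have hpos : 0 < ((B ^ m) *ᵥ u) i :=
    (mul_pos ((hBm i j).lt_of_ne hm.symm) ((hu j).lt_of_ne (Ne.symm hj))).trans_le <|
      Finset.single_le_sum (fun k _ => mul_nonneg (hBm i k) (hu k)) (Finset.mem_univ j)
  rw [hBmu, Pi.smul_apply, smul_eq_mul] at hpos
  exact (hu i).lt_of_ne fun h => by simp [← h] at hpos

end LinearOrderedField

def IsBalanced (W : Matrix ι ι ℝ) : Prop :=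
  ∃ σ : ι → ℝ, (∀ i, σ i = 1 ∨ σ i = -1) ∧ ∀ i j, W i j = σ i * |W i j| * σ j

def IsAntibalanced (W : Matrix ι ι ℝ) : Prop :=
  ∃ σ : ι → ℝ, (∀ i, σ i = 1 ∨ σ i = -1) ∧ ∀ i j, W i j = -(σ i * |W i j| * σ j)

theorem isBalanced_or_isAntibalanced_of_abs_dotProduct_mulVec_eq {W : Matrix ι ι ℝ}
    {v : ι → ℝ} (hv : ∀ i, v i ≠ 0) (h : |v ⬝ᵥ W *ᵥ v| = |v| ⬝ᵥ W.map (|·|) *ᵥ |v|) :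
    W.IsBalanced ∨ W.IsAntibalanced := by
  have hσ : ∀ i, (SignType.sign (v i) : ℝ) = 1 ∨ (SignType.sign (v i) : ℝ) = -1 := fun i => by
    rcases (hv i).lt_or_gt with h | h <;> simp [sign_neg, sign_pos, h]
  simp only [dotProduct_mulVec_eq_sum, map_apply, Pi.abs_apply, ← abs_mul] at h
  rcases Finset.nonneg_or_nonpos_of_abs_sum_eq_sum_abs h with hnn | hnp
  · refine .inl ⟨_, hσ, fun i j => ?_⟩
    exact eq_sign_mul_abs_mul_sign_of_nonneg (hv i) (hv j) (hnn (i, j) (Finset.mem_univ _))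
  · refine .inr ⟨_, hσ, fun i j => ?_⟩
    have := eq_sign_mul_abs_mul_sign_of_nonneg (w := -W i j) (hv i) (hv j)
      (by linarith [hnp (i, j) (Finset.mem_univ _)])
    rw [abs_neg] at this
    linarith

end Matrix

section SpectralRadius

variable {n : ℕ}

theorem abs_le_specRad {M : Matrix (Fin n) (Fin n) ℝ} {z : ℝ} (hz : z ∈ spectrum ℝ M) :
    |z| ≤ specRad M :=
  le_csSup (M.finite_spectrum.image _).bddAbove ⟨z, hz, rfl⟩

theorem specRad_neg (M : Matrix (Fin n) (Fin n) ℝ) : specRad (-M) = specRad M := by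
  rw [specRad, specRad, ← spectrum.neg_eq, ← Set.image_neg_eq_neg, Set.image_image]
  simp_rw [abs_neg]

theorem specRad_diagonal_mul_mul_diagonal (M : Matrix (Fin n) (Fin n) ℝ) {σ : Fin n → ℝ}
    (hσ : ∀ i, σ i = 1 ∨ σ i = -1) :
    specRad (diagonal σ * M * diagonal σ) = specRad M := by
  have hσσ : diagonal σ * diagonal σ = 1 := by
    rw [diagonal_mul_diagonal, ← diagonal_one]
    congr 1
    funext i
    rcases hσ i with h | h <;> simp [h]
  let D : (Matrix (Fin n) (Fin n) ℝ)ˣ := ⟨diagonal σ, diagonal σ, hσσ, hσσ⟩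
  exact congrArg (sSup <| abs '' ·) (spectrum.units_conjugate (u := D))

namespace Matrix.IsHermitian

variable {M : Matrix (Fin n) (Fin n) ℝ} (hM : M.IsHermitian)
include hM

theorem exists_mem_spectrum_abs_eq_specRad [NeZero n] : ∃ z ∈ spectrum ℝ M, |z| = specRad M :=
  Set.Nonempty.csSup_mem (s := abs '' spectrum ℝ M)
    ⟨_, _, hM.eigenvalues_mem_spectrum_real 0, rfl⟩ (M.finite_spectrum.image _)

theorem posSemidef_algebraMap_specRad_sub : (algebraMap ℝ _ (specRad M) - M).PosSemidef := by
  refine posSemidef_iff_isHermitian_and_spectrum_nonneg.mpr ⟨(isHermitian_diagonal _).sub hM, ?_⟩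
  rw [← spectrum.singleton_sub_eq]
  rintro _ ⟨_, rfl, z, hz, rfl⟩
  exact sub_nonneg.mpr ((le_abs_self z).trans (abs_le_specRad hz))

theorem dotProduct_mulVec_le_specRad (x : Fin n → ℝ) : x ⬝ᵥ M *ᵥ x ≤ specRad M * (x ⬝ᵥ x) := by
  have := hM.posSemidef_algebraMap_specRad_sub.dotProduct_mulVec_nonneg x
  rw [sub_mulVec, Algebra.algebraMap_eq_smul_one, smul_mulVec, one_mulVec] at this
  simpa [dotProduct_sub] using this

theorem mulVec_eq_specRad_smul {x : Fin n → ℝ} (hx : x ⬝ᵥ M *ᵥ x = specRad M * (x ⬝ᵥ x)) :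
    M *ᵥ x = specRad M • x := by
  have := hM.posSemidef_algebraMap_specRad_sub.dotProduct_mulVec_zero_iff x
  rw [sub_mulVec, Algebra.algebraMap_eq_smul_one, smul_mulVec, one_mulVec, sub_eq_zero,
    star_trivial, dotProduct_sub, dotProduct_smul, hx, smul_eq_mul, sub_self] at this
  exact (this.mp rfl).symm

end Matrix.IsHermitian

theorem Matrix.IsBalanced.specRad_eq {W : Matrix (Fin n) (Fin n) ℝ} (hW : W.IsBalanced) :
    specRad W = specRad (W.map (|·|)) := by
  obtain ⟨σ, hσ, hWσ⟩ := hW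
  rw [← specRad_diagonal_mul_mul_diagonal (W.map (|·|)) hσ]
  congr 1
  ext i j
  rw [mul_diagonal, diagonal_mul, map_apply]
  exact hWσ i j

theorem Matrix.IsAntibalanced.specRad_eq {W : Matrix (Fin n) (Fin n) ℝ} (hW : W.IsAntibalanced) :
    specRad W = specRad (W.map (|·|)) := by
  obtain ⟨σ, hσ, hWσ⟩ := hW
  rw [← specRad_neg (W.map (|·|)), ← specRad_diagonal_mul_mul_diagonal (-W.map (|·|)) hσ]
  congr 1
  ext i j
  rw [mul_diagonal, diagonal_mul, neg_apply, map_apply]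
  linear_combination hWσ i j

theorem Matrix.isBalanced_or_isAntibalanced_of_specRad_map_abs_le {W : Matrix (Fin n) (Fin n) ℝ}
    (hW : W.IsSymm) (hconn : ∀ i j, ∃ m : ℕ, (W.map (|·|) ^ m) i j ≠ 0)
    (hle : specRad (W.map (|·|)) ≤ specRad W) :
    W.IsBalanced ∨ W.IsAntibalanced := by
  rcases Nat.eq_zero_or_pos n with rfl | hn
  · exact .inl ⟨1, finZeroElim, finZeroElim⟩
  have : NeZero n := ⟨hn.ne'⟩
  have hBH : (W.map (|·|)).IsHermitian := isHermitian_iff_isSymm.mpr (hW.map _)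
  obtain ⟨z, hz, hzW⟩ := (isHermitian_iff_isSymm.mpr hW).exists_mem_spectrum_abs_eq_specRad
  obtain ⟨v, hv0, hWv⟩ := exists_mulVec_eq_smul_of_mem_spectrum hz
  have hvv : 0 ≤ v ⬝ᵥ v := by simpa using dotProduct_self_star_nonneg v
  have hvWv : |v ⬝ᵥ W *ᵥ v| = specRad W * (v ⬝ᵥ v) := by
    rw [hWv, dotProduct_smul, smul_eq_mul, abs_mul, hzW, abs_of_nonneg hvv]
  have huu : |v| ⬝ᵥ |v| = v ⬝ᵥ v := Finset.sum_congr rfl fun i _ => abs_mul_abs_self (v i)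
  have htri := abs_dotProduct_mulVec_le v W
  have hray := hBH.dotProduct_mulVec_le_specRad |v|
  rw [huu] at hray
  have hle' := mul_le_mul_of_nonneg_right hle hvv
  have hBv := hBH.mulVec_eq_specRad_smul (x := |v|) (by rw [huu]; linarith)
  have hpos := pos_of_mulVec_eq_smul (fun i j => abs_nonneg (W i j)) hconn (abs_nonneg v)
    (by simpa using hv0) hBv
  exact isBalanced_or_isAntibalanced_of_abs_dotProduct_mulVec_eq
    (fun i => abs_pos.mp (hpos i)) (by linarith)

end SpectralRadius

/-- A connected signed weighted graph is strictly unbalanced (neither balanced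
nor antibalanced) if and only if ρ(W) < ρ(W̄). -/
theorem strictly_unbalanced_iff_spectral_radius_lt {n : ℕ}
    (W : Matrix (Fin n) (Fin n) ℝ) (hW : W.IsSymm)
    (hconn : ∀ i j : Fin n, ∃ m : ℕ, ((Matrix.of fun a b => |W a b|) ^ m) i j ≠ 0) :
    ((¬ ∃ σ : Fin n → ℝ, (∀ i, σ i = 1 ∨ σ i = -1) ∧
        ∀ i j, W i j = σ i * |W i j| * σ j) ∧
     (¬ ∃ σ : Fin n → ℝ, (∀ i, σ i = 1 ∨ σ i = -1) ∧
        ∀ i j, W i j = -(σ i * |W i j| * σ j))) ↔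
    specRad W < specRad (Matrix.of fun a b => |W a b|) := by
  show ¬ W.IsBalanced ∧ ¬ W.IsAntibalanced ↔ specRad W < specRad (W.map (|·|))
  constructor
  · rintro ⟨hbal, hanti⟩
    by_contra! hle
    exact (isBalanced_or_isAntibalanced_of_specRad_map_abs_le hW hconn hle).elim hbal hanti
  · intro hlt
    exact ⟨fun h => hlt.ne h.specRad_eq, fun h => hlt.ne h.specRad_eq⟩
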